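/- arXiv:0804.4042 — 6 statements merged into one kernel-verified Lean document; each statement's English description precedes it below -/
import Mathlib

section
/- Let C be a binary linear code of length n with minimum distance d, and suppose the coset leader of each coset of C is chosen as its ⪯-minimum element. If x, y ∈ F^n satisfy x ⊆ y (i.e., S(x) ⊆ S(y)) and y is a correctable error (a coset leader), then x is also a correctable error; equivalently, if x is an uncorrectable error then y is an uncorrectable error. That is, E^0(C) and E^1(C) are monotone with respect to the covering order. -/
/-- Support of a binary vector: the set of nonzero coordinates. -/
def supp {n : ℕ} (x : Fin n → ZMod 2) : Finset (Fin n) :=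
  Finset.univ.filter (fun i => x i ≠ 0)

/-- Hamming weight. -/
def wt {n : ℕ} (x : Fin n → ZMod 2) : ℕ := (supp x).card

/-- Numerical value v(x) = Σ_{i=1}^n x_i 2^(n-i) (0-based: exponent n-1-i). -/
def nval {n : ℕ} (x : Fin n → ZMod 2) : ℕ :=
  ∑ i : Fin n, (x i).val * 2 ^ (n - 1 - (i : ℕ))

/-- The total order ⪯ : first by weight, ties broken by numerical value. -/
def ple {n : ℕ} (x y : Fin n → ZMod 2) : Prop :=
  wt x < wt y ∨ (wt x = wt y ∧ nval x ≤ nval y)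

/-- The strict version ≺ of ⪯. -/
def plt {n : ℕ} (x y : Fin n → ZMod 2) : Prop := ple x y ∧ x ≠ y

/-- Covering order: x ⊆ y iff S(x) ⊆ S(y). -/
def covers {n : ℕ} (x y : Fin n → ZMod 2) : Prop := supp x ⊆ supp y

/-- v is the coset leader of its coset of C, i.e. the ⪯-minimum element
(u ranges over the coset of v: u + v ∈ C). -/
def IsCosetLeader {n : ℕ} (C : Submodule (ZMod 2) (Fin n → ZMod 2))
    (v : Fin n → ZMod 2) : Prop :=
  ∀ u, u + v ∈ C → ple v u

/-- E⁰(C): the set of correctable errors (coset leaders). -/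
def E0 {n : ℕ} (C : Submodule (ZMod 2) (Fin n → ZMod 2)) : Set (Fin n → ZMod 2) :=
  {v | IsCosetLeader C v}

/-- E¹(C): the set of uncorrectable errors. -/
def E1 {n : ℕ} (C : Submodule (ZMod 2) (Fin n → ZMod 2)) : Set (Fin n → ZMod 2) :=
  {v | ¬ IsCosetLeader C v}

/-- M¹(C): the ⊆-minimal elements of E¹(C). -/
def M1 {n : ℕ} (C : Submodule (ZMod 2) (Fin n → ZMod 2)) : Set (Fin n → ZMod 2) :=
  {v ∈ E1 C | ∀ u ∈ E1 C, covers u v → u = v}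

/-- v is a larger half of c: v is ⊆-minimal among vectors u with u + c ≺ u. -/
def IsLH {n : ℕ} (c v : Fin n → ZMod 2) : Prop :=
  plt (v + c) v ∧ ∀ u, plt (u + c) u → covers u v → u = v

/-- LH(c): the set of larger halves of c. -/
def LH {n : ℕ} (c : Fin n → ZMod 2) : Set (Fin n → ZMod 2) := {v | IsLH c v}

/-- LH(U) = ∪_{c ∈ U} LH(c). -/
def LHset {n : ℕ} (U : Set (Fin n → ZMod 2)) : Set (Fin n → ZMod 2) :=
  ⋃ c ∈ U, LH c

/-- LH⁻(c): larger halves of c of weight w(c)/2 (for even-weight c). -/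
def LHm {n : ℕ} (c : Fin n → ZMod 2) : Set (Fin n → ZMod 2) :=
  {v ∈ LH c | 2 * wt v = wt c}

/-- A_i(U): elements of U of weight i. -/
def Aw {n : ℕ} (U : Set (Fin n → ZMod 2)) (i : ℕ) : Set (Fin n → ZMod 2) :=
  {v ∈ U | wt v = i}

/-- C has minimum distance d. -/
def HasMinDist {n : ℕ} (C : Submodule (ZMod 2) (Fin n → ZMod 2)) (d : ℕ) : Prop :=
  (∃ c ∈ C, c ≠ 0 ∧ wt c = d) ∧ ∀ c ∈ C, c ≠ 0 → d ≤ wt c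

/-- T is a trial set for C. -/
def IsTrialSet {n : ℕ} (C : Submodule (ZMod 2) (Fin n → ZMod 2))
    (T : Set (Fin n → ZMod 2)) : Prop :=
  T ⊆ (C : Set (Fin n → ZMod 2)) \ {0} ∧ M1 C ⊆ LHset T

/-- l(x) = min S(x), the leftmost nonzero coordinate (⊤ if x = 0). -/
def lm {n : ℕ} (x : Fin n → ZMod 2) : WithTop (Fin n) := (supp x).min

/-- The coordinatewise "and" of two vectors: support is S(x) ∩ S(y). -/
def vand {n : ℕ} (x y : Fin n → ZMod 2) : Fin n → ZMod 2 := fun i => x i * y i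

lemma zmod2_cases (a : ZMod 2) : a = 0 ∨ a = 1 := by revert a; decide

lemma mem_supp {n : ℕ} {x : Fin n → ZMod 2} {i : Fin n} : i ∈ supp x ↔ x i ≠ 0 := by
  simp [supp]

lemma supp_add {n : ℕ} (a b : Fin n → ZMod 2) :
    supp (a + b) = symmDiff (supp a) (supp b) := by
  ext i
  simp only [mem_supp, Finset.mem_symmDiff, Pi.add_apply]
  rcases zmod2_cases (a i) with h | h <;> rcases zmod2_cases (b i) with h' | h' <;>
    simp [h, h'] <;> decide

lemma wt_add_le {n : ℕ} (a b : Fin n → ZMod 2) : wt (a + b) ≤ wt a + wt b := by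
  unfold wt
  rw [supp_add]
  calc (symmDiff (supp a) (supp b)).card ≤ (supp a ∪ supp b).card :=
        Finset.card_le_card (by rw [symmDiff_eq_sup_sdiff_inf]; exact Finset.sdiff_subset)
    _ ≤ (supp a).card + (supp b).card := Finset.card_union_le _ _

lemma disjoint_of_wt_add_eq {n : ℕ} {a b : Fin n → ZMod 2}
    (h : wt (a + b) = wt a + wt b) : Disjoint (supp a) (supp b) := by
  unfold wt at h
  rw [supp_add, symmDiff_eq_sup_sdiff_inf] at h
  simp only [Finset.sup_eq_union, Finset.inf_eq_inter] at h
  have h1 : ((supp a ∪ supp b) \ (supp a ∩ supp b)).card ≤ (supp a ∪ supp b).card :=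
    Finset.card_le_card Finset.sdiff_subset
  have h2 : (supp a ∪ supp b).card + (supp a ∩ supp b).card
      = (supp a).card + (supp b).card := Finset.card_union_add_card_inter _ _
  have h4 : ((supp a ∪ supp b) \ (supp a ∩ supp b)).card
      = (supp a ∪ supp b).card - (supp a ∩ supp b).card :=
    Finset.card_sdiff_of_subset (Finset.inter_subset_union)
  have h3 : (supp a ∩ supp b).card = 0 := by omega
  rw [Finset.card_eq_zero] at h3
  exact Finset.disjoint_iff_inter_eq_empty.mpr h3

lemma wt_add_of_disjoint {n : ℕ} {a b : Fin n → ZMod 2}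
    (h : Disjoint (supp a) (supp b)) : wt (a + b) = wt a + wt b := by
  unfold wt
  rw [supp_add, h.symmDiff_eq_sup]
  exact Finset.card_union_of_disjoint h

lemma nval_add_of_disjoint {n : ℕ} {a b : Fin n → ZMod 2}
    (h : Disjoint (supp a) (supp b)) : nval (a + b) = nval a + nval b := by
  unfold nval
  rw [← Finset.sum_add_distrib]
  refine Finset.sum_congr rfl fun i _ => ?_
  have hi : a i = 0 ∨ b i = 0 := by
    by_contra hc
    push_neg at hc
    exact (Finset.disjoint_left.mp h (mem_supp.mpr hc.1)) (mem_supp.mpr hc.2)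
  rcases hi with hi | hi <;> simp [hi, add_mul]

lemma add_self_vec {n : ℕ} (a : Fin n → ZMod 2) : a + a = 0 := by
  funext i
  have : ∀ c : ZMod 2, c + c = 0 := by decide
  exact this (a i)

lemma ple_wt_le {n : ℕ} {a b : Fin n → ZMod 2} (h : ple a b) : wt a ≤ wt b := by
  rcases h with h | h
  · omega
  · omega

lemma E0_mono {n : ℕ} (C : Submodule (ZMod 2) (Fin n → ZMod 2))
    (x y : Fin n → ZMod 2) (hxy : covers x y) (hy : y ∈ E0 C) : x ∈ E0 C := by
  intro u hu
  by_contra hple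
  -- w is the "extra" part of y: y = x + w with disjoint supports
  set w : Fin n → ZMod 2 := x + y with hw
  have hdxw : Disjoint (supp x) (supp w) := by
    rw [Finset.disjoint_left]
    intro i hix hiw
    rw [mem_supp] at hix hiw
    have hx1 : x i = 1 := by
      rcases zmod2_cases (x i) with h | h
      · exact absurd h hix
      · exact h
    have hy1 : y i = 1 := by
      have := hxy (mem_supp.mpr hix)
      rw [mem_supp] at this
      rcases zmod2_cases (y i) with h | h
      · exact absurd h this
      · exact h
    apply hiw
    show x i + y i = 0
    rw [hx1, hy1]; decide
  have hxwy : x + w = y := by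
    rw [hw, ← add_assoc, add_self_vec, zero_add]
  -- y' = u + w is in the coset of y
  have hcoset : (u + w) + y ∈ C := by
    have : (u + w) + y = u + x := by
      rw [← hxwy]
      have : (u + w) + (x + w) = (u + x) + (w + w) := by ring
      rw [this, add_self_vec, add_zero]
    rw [this]; exact hu
  have hple_y : ple y (u + w) := hy _ hcoset
  -- weight and value decomposition of y
  have hwty : wt y = wt x + wt w := by rw [← hxwy]; exact wt_add_of_disjoint hdxw
  have hnvy : nval y = nval x + nval w := by rw [← hxwy]; exact nval_add_of_disjoint hdxw
  have hwt' : wt (u + w) ≤ wt u + wt w := wt_add_le u w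
  -- unpack ¬ ple x u
  unfold ple at hple
  push_neg at hple
  obtain ⟨hwu, hnv⟩ := hple
  have hwy_le : wt y ≤ wt (u + w) := ple_wt_le hple_y
  -- forced equalities
  have hwux : wt u = wt x := by omega
  have hwt_eq : wt (u + w) = wt u + wt w := by omega
  have hduw : Disjoint (supp u) (supp w) := disjoint_of_wt_add_eq hwt_eq
  have hnvy' : nval (u + w) = nval u + nval w := nval_add_of_disjoint hduw
  have hnvu : nval u < nval x := hnv hwux.symm
  rcases hple_y with h | h
  · omega
  · omega

/-- monotone structure of correctable/uncorrectable errors. -/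
theorem stmt0 {n : ℕ} (C : Submodule (ZMod 2) (Fin n → ZMod 2))
    (x y : Fin n → ZMod 2) (hxy : covers x y) :
    (y ∈ E0 C → x ∈ E0 C) ∧ (x ∈ E1 C → y ∈ E1 C) := by
  refine ⟨E0_mono C x y hxy, fun hx hy => hx (E0_mono C x y hxy hy)⟩
end

section
/- Let C be a binary linear code and c ∈ C a nonzero codeword. A vector v ∈ F^n is a larger half of c (i.e., v is minimal with respect to the covering order ⊆ among vectors with v + c ≺ v) if and only if: (1) v ⊆ c; (2) w(c) ≤ 2w(v) ≤ w(c) + 2; and (3) if w(c) is even then l(v) = l(c) when 2w(v) = w(c), and l(v) > l(c) when 2w(v) = w(c) + 2, where l(x) = min S(x). -/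
namespace LHaux
variable {n : ℕ}

lemma mem_supp {x : Fin n → ZMod 2} {i : Fin n} : i ∈ supp x ↔ x i ≠ 0 := by
  simp [supp]

lemma eq_iff_supp {x y : Fin n → ZMod 2} : x = y ↔ supp x = supp y := by
  constructor
  · rintro rfl; rfl
  · intro h
    funext i
    have hxy : ∀ a b : ZMod 2, a = b ↔ (a ≠ 0 ↔ b ≠ 0) := by decide
    rw [hxy]
    constructor <;> intro hi
    · exact mem_supp.mp (h ▸ mem_supp.mpr hi)
    · exact mem_supp.mp (h ▸ mem_supp.mpr hi)

lemma supp_add (x y : Fin n → ZMod 2) :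
    supp (x + y) = (supp x \ supp y) ∪ (supp y \ supp x) := by
  ext i
  have h2 : ∀ a b : ZMod 2, (a + b ≠ 0) ↔ ((a ≠ 0 ∧ ¬ b ≠ 0) ∨ (b ≠ 0 ∧ ¬ a ≠ 0)) := by decide
  simp [mem_supp, Pi.add_apply, h2]

lemma supp_vand (x y : Fin n → ZMod 2) : supp (vand x y) = supp x ∩ supp y := by
  ext i
  have h2 : ∀ a b : ZMod 2, a * b ≠ 0 ↔ (a ≠ 0 ∧ b ≠ 0) := by decide
  simp [mem_supp, vand, h2]

lemma supp_nonempty {x : Fin n → ZMod 2} (hx : x ≠ 0) : (supp x).Nonempty := by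
  rw [Finset.nonempty_iff_ne_empty]
  intro h
  apply hx
  rw [eq_iff_supp, h]
  ext i; simp [mem_supp]

/-- value of a support set -/
def Nv (n : ℕ) (s : Finset (Fin n)) : ℕ := ∑ i ∈ s, 2 ^ (n - 1 - (i : ℕ))

lemma nval_eq (x : Fin n → ZMod 2) : nval x = Nv n (supp x) := by
  have hval : ∀ a : ZMod 2, a.val = if a ≠ 0 then 1 else 0 := by decide
  unfold nval Nv supp
  rw [Finset.sum_filter]
  apply Finset.sum_congr rfl
  intro i _
  rw [hval]
  by_cases h : x i ≠ 0 <;> simp [h]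

lemma sum_range_two_pow (m : ℕ) : ∑ i ∈ Finset.range m, 2 ^ i = 2 ^ m - 1 := by
  induction m with
  | zero => simp
  | succ k ih => rw [Finset.sum_range_succ, ih]; have := Nat.one_le_two_pow (n := k); omega

lemma Nv_lt {A B : Finset (Fin n)} {l : Fin n} (hl : l ∈ B) (h : ∀ j ∈ A, l < j) :
    Nv n A < Nv n B := by
  have hAle : Nv n A ≤ 2 ^ (n - 1 - (l : ℕ)) - 1 := by
    have himg : Nv n A = ∑ e ∈ A.image (fun j : Fin n => n - 1 - (j : ℕ)), 2 ^ e := by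
      rw [Finset.sum_image]
      · rfl
      intro a _ b _ hab
      have ha : (a : ℕ) ≤ n - 1 := Nat.le_sub_one_of_lt a.isLt
      have hb : (b : ℕ) ≤ n - 1 := Nat.le_sub_one_of_lt b.isLt
      simp only at hab
      exact Fin.ext (by omega)
    rw [himg]
    have hsub : A.image (fun j : Fin n => n - 1 - (j : ℕ)) ⊆ Finset.range (n - 1 - (l : ℕ)) := by
      intro e he
      rw [Finset.mem_image] at he
      obtain ⟨j, hj, rfl⟩ := he
      have := h j hj
      have hjn : (j : ℕ) ≤ n - 1 := Nat.le_sub_one_of_lt j.isLt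
      have hlj : (l : ℕ) < (j : ℕ) := this
      simp only [Finset.mem_range]
      omega
    calc ∑ e ∈ A.image (fun j : Fin n => n - 1 - (j : ℕ)), 2 ^ e
        ≤ ∑ e ∈ Finset.range (n - 1 - (l : ℕ)), 2 ^ e := Finset.sum_le_sum_of_subset hsub
      _ = 2 ^ (n - 1 - (l : ℕ)) - 1 := sum_range_two_pow _
  have hBge : 2 ^ (n - 1 - (l : ℕ)) ≤ Nv n B :=
    Finset.single_le_sum (f := fun j : Fin n => 2 ^ (n - 1 - (j : ℕ))) (fun i _ => Nat.zero_le _) hl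
  have := Nat.one_le_two_pow (n := n - 1 - (l : ℕ))
  omega

lemma Nv_union {A B : Finset (Fin n)} (h : Disjoint A B) :
    Nv n (A ∪ B) = Nv n A + Nv n B := Finset.sum_union h


lemma add_ne_self {c u : Fin n → ZMod 2} (hc0 : c ≠ 0) : u + c ≠ u := by
  intro h
  exact hc0 (add_eq_left.mp h)

lemma supp_add_of_covers {v c : Fin n → ZMod 2} (h : covers v c) :
    supp (v + c) = supp c \ supp v := by
  rw [supp_add]
  have : supp v \ supp c = ∅ := Finset.sdiff_eq_empty_iff_subset.mpr h
  rw [this, Finset.empty_union]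

/-- the key reduction: plt (u + c) u depends only on vand u c -/
lemma plt_add_vand {c : Fin n → ZMod 2} (hc0 : c ≠ 0) (u : Fin n → ZMod 2) :
    plt (u + c) u ↔ plt (vand u c + c) (vand u c) := by
  set A := supp u ∩ supp c with hA
  set B := supp u \ supp c with hB
  set D := supp c \ supp u with hD
  have hsu : supp u = A ∪ B := by
    ext i; simp only [hA, hB, Finset.mem_union, Finset.mem_inter, Finset.mem_sdiff]; tauto
  have hsuc : supp (u + c) = B ∪ D := supp_add u c
  have hsa : supp (vand u c) = A := supp_vand u c
  have hsac : supp (vand u c + c) = D := by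
    rw [supp_add, hsa]
    have h1 : A \ supp c = ∅ := by
      rw [Finset.sdiff_eq_empty_iff_subset]; exact Finset.inter_subset_right
    have h2 : supp c \ A = D := by
      ext i; simp only [hA, hD, Finset.mem_sdiff, Finset.mem_inter]; tauto
    rw [h1, h2, Finset.empty_union]
  have dAB : Disjoint A B := Finset.disjoint_sdiff.mono_left Finset.inter_subset_right
  have dBD : Disjoint B D := by
    rw [Finset.disjoint_left]
    intro i hiB hiD
    rw [hB, Finset.mem_sdiff] at hiB
    rw [hD, Finset.mem_sdiff] at hiD
    exact hiB.2 hiD.1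
  have wtu : wt u = A.card + B.card := by rw [wt, hsu, Finset.card_union_of_disjoint dAB]
  have wtuc : wt (u + c) = B.card + D.card := by
    rw [wt, hsuc, Finset.card_union_of_disjoint dBD]
  have wta : wt (vand u c) = A.card := by rw [wt, hsa]
  have wtac : wt (vand u c + c) = D.card := by rw [wt, hsac]
  have nvu : nval u = Nv n A + Nv n B := by rw [nval_eq, hsu, Nv_union dAB]
  have nvuc : nval (u + c) = Nv n B + Nv n D := by rw [nval_eq, hsuc, Nv_union dBD]
  have nva : nval (vand u c) = Nv n A := by rw [nval_eq, hsa]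
  have nvac : nval (vand u c + c) = Nv n D := by rw [nval_eq, hsac]
  unfold plt ple
  rw [wtu, wtuc, wta, wtac, nvu, nvuc, nva, nvac]
  have hne1 : u + c ≠ u := add_ne_self hc0
  have hne2 : vand u c + c ≠ vand u c := add_ne_self hc0
  rw [and_iff_left hne1, and_iff_left hne2]
  constructor
  · rintro (h | ⟨h1, h2⟩)
    · left; omega
    · right; exact ⟨by omega, by omega⟩
  · rintro (h | ⟨h1, h2⟩)
    · left; omega
    · right; exact ⟨by omega, by omega⟩

lemma lm_le_of_covers {v c : Fin n → ZMod 2} (h : covers v c) : lm c ≤ lm v := by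
  unfold lm
  apply Finset.le_min
  intro b hb
  exact Finset.min_le (h hb)

lemma lm_eq_coe {c : Fin n → ZMod 2} (hc : (supp c).Nonempty) :
    lm c = ((supp c).min' hc : WithTop (Fin n)) := (Finset.coe_min' hc).symm

/-- For v ⊆ c, v ≠ 0: lm v = lm c iff min' of c is in supp v. -/
lemma lm_eq_iff {v c : Fin n → ZMod 2} (h : covers v c) (hc : (supp c).Nonempty) :
    lm v = lm c ↔ (supp c).min' hc ∈ supp v := by
  constructor
  · intro he
    rw [lm_eq_coe hc] at he
    exact Finset.mem_of_min he
  · intro hm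
    apply le_antisymm
    · rw [lm_eq_coe hc]
      exact Finset.min_le hm
    · exact lm_le_of_covers h

lemma plt_add_of_covers {v c : Fin n → ZMod 2} (hc0 : c ≠ 0) (h : covers v c) :
    plt (v + c) v ↔ (wt c < 2 * wt v ∨ (wt c = 2 * wt v ∧ lm v = lm c)) := by
  have hD : supp (v + c) = supp c \ supp v := supp_add_of_covers h
  have hcard : wt (v + c) + wt v = wt c := by
    rw [wt, wt, wt, hD, Finset.card_sdiff_add_card_eq_card h]
  have hne : v + c ≠ v := add_ne_self hc0
  have hnvv : nval v = Nv n (supp v) := nval_eq v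
  have hnvvc : nval (v + c) = Nv n (supp c \ supp v) := by rw [nval_eq, hD]
  unfold plt ple
  rw [and_iff_left hne]
  by_cases hw : wt c = 2 * wt v
  · have hcne : (supp c).Nonempty := supp_nonempty hc0
    have hvne : (supp v).Nonempty := by
      rw [← Finset.card_pos]
      have h1 : 0 < (supp c).card := Finset.card_pos.mpr hcne
      show 0 < wt v
      unfold wt at *
      omega
    set l := (supp c).min' hcne with hl
    have hlc : l ∈ supp c := Finset.min'_mem _ _
    have hBD : supp c = supp v ∪ (supp c \ supp v) :=
      (Finset.union_sdiff_of_subset h).symm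
    rcases Finset.mem_union.mp (hBD ▸ hlc) with hlB | hlD
    · have hlt : Nv n (supp c \ supp v) < Nv n (supp v) := by
        apply Nv_lt hlB
        intro j hj
        have hjc : j ∈ supp c := Finset.sdiff_subset hj
        have hle : l ≤ j := Finset.min'_le _ _ hjc
        have hne2 : l ≠ j := by
          intro e; rw [e] at hlB; exact (Finset.mem_sdiff.mp hj).2 hlB
        exact lt_of_le_of_ne hle hne2
      have hlm : lm v = lm c := (lm_eq_iff h hcne).mpr hlB
      constructor
      · intro _; right; exact ⟨hw, hlm⟩
      · intro _; right; exact ⟨by omega, by omega⟩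
    · have hlt : Nv n (supp v) < Nv n (supp c \ supp v) := by
        apply Nv_lt hlD
        intro j hj
        have hjc : j ∈ supp c := h hj
        have hle : l ≤ j := Finset.min'_le _ _ hjc
        have hne2 : l ≠ j := by
          intro e; rw [e] at hlD; exact (Finset.mem_sdiff.mp hlD).2 hj
        exact lt_of_le_of_ne hle hne2
      have hlm : lm v ≠ lm c := by
        intro e; exact (Finset.mem_sdiff.mp hlD).2 ((lm_eq_iff h hcne).mp e)
      constructor
      · rintro (h1 | ⟨h1, h2⟩) <;> omega
      · rintro (h1 | ⟨h1, h2⟩)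
        · omega
        · exact absurd h2 hlm
  · constructor
    · rintro (h1 | ⟨h1, h2⟩)
      · left; omega
      · omega
    · rintro (h1 | ⟨h1, h2⟩)
      · left; omega
      · exact absurd h1 hw

lemma supp_update_zero (v : Fin n → ZMod 2) (j : Fin n) :
    supp (Function.update v j 0) = supp v \ {j} := by
  ext i
  simp only [mem_supp, Finset.mem_sdiff, Finset.mem_singleton, Function.update_apply]
  by_cases hij : i = j <;> simp [hij]

lemma covers_vand (u c : Fin n → ZMod 2) : covers (vand u c) u := by
  rw [covers, supp_vand]; exact Finset.inter_subset_left

lemma vand_eq_self {u c : Fin n → ZMod 2} (h : covers u c) : vand u c = u := by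
  rw [eq_iff_supp, supp_vand, Finset.inter_eq_left]
  exact h

theorem stmt1' {n : ℕ} (C : Submodule (ZMod 2) (Fin n → ZMod 2))
    (c : Fin n → ZMod 2) (hc : c ∈ C) (hc0 : c ≠ 0) (v : Fin n → ZMod 2) :
    (plt (v + c) v ∧ ∀ u, plt (u + c) u → covers u v → u = v) ↔
      covers v c ∧
      (wt c ≤ 2 * wt v ∧ 2 * wt v ≤ wt c + 2) ∧
      (Even (wt c) →
        (2 * wt v = wt c → lm v = lm c) ∧
        (2 * wt v = wt c + 2 → lm c < lm v)) := by
  have hcne : (supp c).Nonempty := supp_nonempty hc0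
  have hwc1 : 1 ≤ wt c := Finset.card_pos.mpr hcne
  constructor
  · rintro ⟨hplt, hmin⟩
    have hcov : covers v c := by
      have h1 : plt (vand v c + c) (vand v c) := (plt_add_vand hc0 v).mp hplt
      have h2 := hmin (vand v c) h1 (covers_vand v c)
      rw [covers, ← Finset.inter_eq_left, ← supp_vand, h2]
    have hP := (plt_add_of_covers hc0 hcov).mp hplt
    have hlb : wt c ≤ 2 * wt v := by rcases hP with h1 | ⟨h1, _⟩ <;> omega
    have hub : 2 * wt v ≤ wt c + 2 := by
      by_contra hbig
      push_neg at hbig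
      have hvne : (supp v).Nonempty := by
        rw [← Finset.card_pos]; show 0 < wt v; omega
      obtain ⟨j, hj⟩ := hvne
      set u := Function.update v j 0 with hu
      have hsu : supp u = supp v \ {j} := supp_update_zero v j
      have hwu : wt u + 1 = wt v := by
        have h1 : (supp v \ {j}).card = (supp v).card - 1 := by
          rw [Finset.card_sdiff_of_subset (Finset.singleton_subset_iff.mpr hj)]
          simp
        have h2 : 1 ≤ (supp v).card := Finset.card_pos.mpr ⟨j, hj⟩
        unfold wt
        rw [hsu]
        omega
      have hcovuv : covers u v := by rw [covers, hsu]; exact Finset.sdiff_subset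
      have hcovuc : covers u c := fun i hi => hcov (hcovuv hi)
      have hpu : plt (u + c) u :=
        (plt_add_of_covers hc0 hcovuc).mpr (Or.inl (by omega))
      have heq := hmin u hpu hcovuv
      have : j ∈ supp u := by rw [heq]; exact hj
      rw [hsu] at this
      exact (Finset.mem_sdiff.mp this).2 (Finset.mem_singleton.mpr rfl)
    refine ⟨hcov, ⟨hlb, hub⟩, ?_⟩
    intro heven
    constructor
    · intro h2w
      rcases hP with h1 | ⟨_, h2⟩
      · omega
      · exact h2
    · intro h2w
      have hle : lm c ≤ lm v := lm_le_of_covers hcov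
      rcases hle.lt_or_eq with hlt | heq
      · exact hlt
      · exfalso
        have hlmem : (supp c).min' hcne ∈ supp v := (lm_eq_iff hcov hcne).mp heq.symm
        have hwc2 : 2 ≤ wt c := by
          rcases heven with ⟨k, hk⟩; omega
        obtain ⟨j, hjv, hjl⟩ : ∃ j ∈ supp v, j ≠ (supp c).min' hcne := by
          by_contra hno
          push_neg at hno
          have hsub : supp v ⊆ {(supp c).min' hcne} := fun i hi =>
            Finset.mem_singleton.mpr (hno i hi)
          have := Finset.card_le_card hsub
          rw [Finset.card_singleton] at this
          show False
          have : wt v ≤ 1 := this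
          omega
        set u := Function.update v j 0 with hu
        have hsu : supp u = supp v \ {j} := supp_update_zero v j
        have hwu : wt u + 1 = wt v := by
          have h1 : (supp v \ {j}).card = (supp v).card - 1 := by
            rw [Finset.card_sdiff_of_subset (Finset.singleton_subset_iff.mpr hjv)]
            simp
          have h2 : 1 ≤ (supp v).card := Finset.card_pos.mpr ⟨j, hjv⟩
          unfold wt
          rw [hsu]
          omega
        have hcovuv : covers u v := by rw [covers, hsu]; exact Finset.sdiff_subset
        have hcovuc : covers u c := fun i hi => hcov (hcovuv hi)
        have hlmu : (supp c).min' hcne ∈ supp u := by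
          rw [hsu, Finset.mem_sdiff, Finset.mem_singleton]
          exact ⟨hlmem, fun e => hjl e.symm⟩
        have hlmeq : lm u = lm c := (lm_eq_iff hcovuc hcne).mpr hlmu
        have hpu : plt (u + c) u :=
          (plt_add_of_covers hc0 hcovuc).mpr (Or.inr ⟨by omega, hlmeq⟩)
        have heq2 := hmin u hpu hcovuv
        have : j ∈ supp u := by rw [heq2]; exact hjv
        rw [hsu] at this
        exact (Finset.mem_sdiff.mp this).2 (Finset.mem_singleton.mpr rfl)
  · rintro ⟨hcov, ⟨hlb, hub⟩, hparity⟩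
    have hplt : plt (v + c) v := by
      rw [plt_add_of_covers hc0 hcov]
      rcases Nat.lt_or_ge (wt c) (2 * wt v) with h1 | h2
      · exact Or.inl h1
      · have he : wt c = 2 * wt v := by omega
        have heven : Even (wt c) := ⟨wt v, by omega⟩
        exact Or.inr ⟨he, (hparity heven).1 he.symm⟩
    refine ⟨hplt, ?_⟩
    intro u hu hucov
    have hucc : covers u c := fun i hi => hcov (hucov hi)
    have hP := (plt_add_of_covers hc0 hucc).mp hu
    have hwuv : wt u ≤ wt v := Finset.card_le_card hucov
    have hvu : wt v ≤ wt u := by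
      rcases hP with h1 | ⟨h1, h2⟩
      · omega
      · have heven : Even (wt c) := ⟨wt u, by omega⟩
        rcases (show 2 * wt v = wt c ∨ 2 * wt v = wt c + 2 by omega) with h3 | h3
        · omega
        · exfalso
          have h4 := (hparity heven).2 h3
          have h5 : lm v ≤ lm u := lm_le_of_covers hucov
          rw [h2] at h5
          exact absurd h4 (not_lt.mpr h5)
    exact eq_iff_supp.mpr (Finset.eq_of_subset_of_card_le hucov hvu)

end LHaux

/-- characterization of larger halves. -/
theorem stmt1 {n : ℕ} (C : Submodule (ZMod 2) (Fin n → ZMod 2))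
    (c : Fin n → ZMod 2) (hc : c ∈ C) (hc0 : c ≠ 0) (v : Fin n → ZMod 2) :
    v ∈ LH c ↔
      covers v c ∧
      (wt c ≤ 2 * wt v ∧ 2 * wt v ≤ wt c + 2) ∧
      (Even (wt c) →
        (2 * wt v = wt c → lm v = lm c) ∧
        (2 * wt v = wt c + 2 → lm c < lm v)) := by
  exact LHaux.stmt1' C c hc hc0 v
end

section
/- Let c be a nonzero codeword of a binary linear code C. If w(c) is odd, then every larger half of c has weight (w(c)+1)/2. If w(c) is even, then every larger half of c has weight w(c)/2 or w(c)/2 + 1. -/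
section Aux

variable {n : ℕ}

lemma mem_supp_iff (x : Fin n → ZMod 2) (i : Fin n) : i ∈ supp x ↔ x i ≠ 0 := by
  simp [supp]

lemma zmod2_eq_one_of_ne_zero {a : ZMod 2} (h : a ≠ 0) : a = 1 := by
  revert h; revert a; decide

lemma supp_update_zero (v : Fin n → ZMod 2) (i : Fin n) :
    supp (Function.update v i 0) = (supp v).erase i := by
  ext j
  simp only [mem_supp_iff, Finset.mem_erase]
  rcases eq_or_ne j i with rfl | h
  · simp
  · simp [Function.update_of_ne h, h]

lemma wt_update_zero (v : Fin n → ZMod 2) (i : Fin n) (h : v i ≠ 0) :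
    wt (Function.update v i 0) = wt v - 1 := by
  unfold wt
  rw [supp_update_zero, Finset.card_erase_of_mem ((mem_supp_iff v i).2 h)]

lemma nval_eq_update (v : Fin n → ZMod 2) (i : Fin n) :
    nval v = (v i).val * 2 ^ (n - 1 - (i : ℕ)) + nval (Function.update v i 0) := by
  unfold nval
  have h : ∀ j : Fin n, ((Function.update v i 0) j).val * 2 ^ (n - 1 - (j : ℕ)) =
      Function.update (fun j : Fin n => (v j).val * 2 ^ (n - 1 - (j : ℕ))) i 0 j := by
    intro j
    rcases eq_or_ne j i with rfl | h
    · simp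
    · simp [Function.update_of_ne h]
  rw [Finset.sum_congr rfl (fun j _ => h j),
    Finset.sum_update_of_mem (Finset.mem_univ i),
    ← Finset.add_sum_erase _ _ (Finset.mem_univ i)]
  rw [Finset.erase_eq]
  ring

lemma add_ne_self_of_ne {c u : Fin n → ZMod 2} (hc : c ≠ 0) : u + c ≠ u := by
  intro h
  exact hc (by simpa using h)

/-- A larger half of `c` is covered by `c`. -/
lemma lh_supp_subset {c v : Fin n → ZMod 2} (hv : IsLH c v) : supp v ⊆ supp c := by
  by_contra h
  rw [Finset.not_subset] at h
  obtain ⟨i, hiv, hic⟩ := h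
  have hvi : v i ≠ 0 := (mem_supp_iff v i).1 hiv
  have hci : c i = 0 := by
    by_contra h'; exact hic ((mem_supp_iff c i).2 h')
  obtain ⟨⟨hple, hne⟩, hmin⟩ := hv
  have hc0 : c ≠ 0 := by
    intro h'; subst h'; simp at hne
  set u := Function.update v i 0 with hu
  have huc : u + c = Function.update (v + c) i 0 := by
    funext j
    rcases eq_or_ne j i with rfl | hj
    · simp [hu, hci]
    · simp [hu, Function.update_of_ne hj]
  have hvci : (v + c) i ≠ 0 := by
    simpa [Pi.add_apply, hci] using hvi
  have hwu : wt u = wt v - 1 := wt_update_zero v i hvi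
  have hwuc : wt (u + c) = wt (v + c) - 1 := by
    rw [huc]; exact wt_update_zero _ i hvci
  have hwv_pos : 0 < wt v := Finset.card_pos.2 ⟨i, hiv⟩
  have hwvc_pos : 0 < wt (v + c) := Finset.card_pos.2 ⟨i, (mem_supp_iff _ i).2 hvci⟩
  have hnv := nval_eq_update v i
  have hnvc := nval_eq_update (v + c) i
  rw [← hu] at hnv
  rw [← huc] at hnvc
  rw [zmod2_eq_one_of_ne_zero hvi] at hnv
  rw [zmod2_eq_one_of_ne_zero hvci] at hnvc
  norm_num at hnv hnvc
  have hplt : plt (u + c) u := by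
    refine ⟨?_, add_ne_self_of_ne hc0⟩
    rcases hple with h1 | ⟨h1, h2⟩
    · left; omega
    · right; constructor
      · omega
      · omega
  have hcov : covers u v := by
    unfold covers
    rw [hu, supp_update_zero]
    exact Finset.erase_subset _ _
  have := hmin u hplt hcov
  apply hvi
  rw [← this, hu]
  simp

lemma supp_add_of_subset {c v : Fin n → ZMod 2} (h : supp v ⊆ supp c) :
    supp (v + c) = supp c \ supp v := by
  ext j
  simp only [mem_supp_iff, Finset.mem_sdiff, Pi.add_apply]
  rcases eq_or_ne (v j) 0 with hv | hv
  · simp [hv]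
  · have hcj : c j ≠ 0 := (mem_supp_iff c j).1 (h ((mem_supp_iff v j).2 hv))
    rw [zmod2_eq_one_of_ne_zero hv, zmod2_eq_one_of_ne_zero hcj]
    decide

lemma supp_update_one (x : Fin n → ZMod 2) (i : Fin n) :
    supp (Function.update x i 1) = insert i (supp x) := by
  ext j
  simp only [mem_supp_iff, Finset.mem_insert]
  rcases eq_or_ne j i with rfl | h
  · simp
  · simp [Function.update_of_ne h, h]

/-- Upper bound: a larger half can't be too heavy. -/
lemma lh_wt_upper {c v : Fin n → ZMod 2} (hv : IsLH c v) :
    wt v ≤ wt (v + c) + 2 := by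
  by_contra h
  push_neg at h
  obtain ⟨⟨hple, hne⟩, hmin⟩ := hv
  have hc0 : c ≠ 0 := by
    intro h'; subst h'; simp at hne
  have hsub := lh_supp_subset ⟨⟨hple, hne⟩, hmin⟩
  have hwv_pos : 0 < wt v := by omega
  obtain ⟨i, hiv⟩ := Finset.card_pos.1 hwv_pos
  have hvi : v i ≠ 0 := (mem_supp_iff v i).1 hiv
  have hci : c i ≠ 0 := (mem_supp_iff c i).1 (hsub hiv)
  have hvci : (v + c) i = 0 := by
    rw [Pi.add_apply, zmod2_eq_one_of_ne_zero hvi, zmod2_eq_one_of_ne_zero hci]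
    decide
  set u := Function.update v i 0 with hu
  have huc : u + c = Function.update (v + c) i 1 := by
    funext j
    rcases eq_or_ne j i with rfl | hj
    · simp [hu, zmod2_eq_one_of_ne_zero hci]
    · simp [hu, Function.update_of_ne hj]
  have hwu : wt u = wt v - 1 := wt_update_zero v i hvi
  have hwuc : wt (u + c) = wt (v + c) + 1 := by
    rw [huc]
    unfold wt
    rw [supp_update_one, Finset.card_insert_of_notMem]
    intro hmem
    exact ((mem_supp_iff _ i).1 hmem) hvci
  have hplt : plt (u + c) u := by
    refine ⟨Or.inl (by omega), add_ne_self_of_ne hc0⟩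
  have hcov : covers u v := by
    unfold covers
    rw [hu, supp_update_zero]
    exact Finset.erase_subset _ _
  have := hmin u hplt hcov
  apply hvi
  rw [← this, hu]
  simp

end Aux

/-- weights of larger halves. -/
theorem stmt2 {n : ℕ} (C : Submodule (ZMod 2) (Fin n → ZMod 2))
    (c : Fin n → ZMod 2) (hc : c ∈ C) (hc0 : c ≠ 0) :
    (Odd (wt c) → ∀ v ∈ LH c, 2 * wt v = wt c + 1) ∧
    (Even (wt c) → ∀ v ∈ LH c, 2 * wt v = wt c ∨ 2 * wt v = wt c + 2) := by
  have key : ∀ v ∈ LH c, wt c ≤ 2 * wt v ∧ 2 * wt v ≤ wt c + 2 := by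
    intro v hv
    have hv' : IsLH c v := hv
    have hsub := lh_supp_subset hv'
    have hle : wt v ≤ wt c := Finset.card_le_card hsub
    have hwvc : wt (v + c) = wt c - wt v := by
      unfold wt
      rw [supp_add_of_subset hsub, Finset.card_sdiff_of_subset hsub]
    have hupper := lh_wt_upper hv'
    obtain ⟨⟨hple, hne⟩, -⟩ := hv'
    have hlow : wt (v + c) ≤ wt v := by
      rcases hple with h1 | ⟨h1, -⟩ <;> omega
    omega
  constructor
  · rintro ⟨k, hk⟩ v hv
    obtain ⟨h1, h2⟩ := key v hv
    omega
  · rintro ⟨k, hk⟩ v hv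
    obtain ⟨h1, h2⟩ := key v hv
    omega
end

section
/- Let C be a binary linear code and c, c' nonzero codewords of C. Every common larger half v ∈ LH(c) ∩ LH(c') satisfies v ⊆ c ∩ c', where c ∩ c' denotes the vector whose support is S(c) ∩ S(c'). -/
lemma val_eq_one_of_ne_zero (a : ZMod 2) (h : a ≠ 0) : a.val = 1 := by
  have h1 : a.val < 2 := ZMod.val_lt a
  have h2 : a.val ≠ 0 := by
    intro h0
    exact h ((ZMod.val_eq_zero a).mp h0)
  omega

lemma lh_covers {n : ℕ} (c v : Fin n → ZMod 2) (h : IsLH c v) : covers v c := by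
  intro i hi
  by_contra hic
  have hvi : v i ≠ 0 := by simpa [supp] using hi
  have hci : c i = 0 := by
    by_contra hh
    exact hic (by simpa [supp] using hh)
  set u : Fin n → ZMod 2 := fun j => if j = i then 0 else v j with hu
  have hui : u i = 0 := by simp [hu]
  have hsu : supp u = (supp v).erase i := by
    ext j
    by_cases hj : j = i <;> simp [supp, hu, hj, hvi]
  have hsuc : supp (u + c) = (supp (v + c)).erase i := by
    ext j
    by_cases hj : j = i
    · subst hj
      simp [supp, hu, hci]
    · have huv : u j = v j := by simp [hu, hj]
      simp [supp, hj, huv]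
  have hivc : i ∈ supp (v + c) := by
    simp [supp, Pi.add_apply, hci, hvi]
  have hwv : wt v = wt u + 1 := by
    rw [wt, wt, hsu, Finset.card_erase_add_one hi]
  have hwvc : wt (v + c) = wt (u + c) + 1 := by
    rw [wt, wt, hsuc, Finset.card_erase_add_one hivc]
  -- nval relations
  have key : ∀ w : Fin n → ZMod 2, nval w =
      ∑ j ∈ Finset.univ.erase i, (w j).val * 2 ^ (n - 1 - (j : ℕ))
        + (w i).val * 2 ^ (n - 1 - (i : ℕ)) :=
    fun w => (Finset.sum_erase_add _ _ (Finset.mem_univ i)).symm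
  have hnv : nval v = nval u + 2 ^ (n - 1 - (i : ℕ)) := by
    have hcg : ∀ j ∈ Finset.univ.erase i, (v j).val * 2 ^ (n - 1 - (j : ℕ))
        = (u j).val * 2 ^ (n - 1 - (j : ℕ)) := by
      intro j hj
      have hj' := Finset.ne_of_mem_erase hj
      simp [hu, hj']
    rw [key v, key u, Finset.sum_congr rfl hcg]
    simp [hui, val_eq_one_of_ne_zero _ hvi]
  have hnvc : nval (v + c) = nval (u + c) + 2 ^ (n - 1 - (i : ℕ)) := by
    have hvc : (v + c) i = v i := by simp [hci]
    have huc : (u + c) i = 0 := by simp [hui, hci]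
    have hcg : ∀ j ∈ Finset.univ.erase i, ((v + c) j).val * 2 ^ (n - 1 - (j : ℕ))
        = ((u + c) j).val * 2 ^ (n - 1 - (j : ℕ)) := by
      intro j hj
      have hj' := Finset.ne_of_mem_erase hj
      simp [hu, hj']
    rw [key (v + c), key (u + c), Finset.sum_congr rfl hcg, hvc, huc]
    simp [val_eq_one_of_ne_zero _ hvi]
  -- c ≠ 0
  have hcne : c ≠ 0 := by
    intro h0
    exact h.1.2 (by simp [h0])
  have hune : u + c ≠ u := by
    intro heq
    apply hcne
    funext j
    have := congrFun heq j
    simpa using this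
  have hple : ple (u + c) u := by
    rcases h.1.1 with hlt | ⟨heq, hle⟩
    · left; omega
    · right; constructor <;> omega
  have hcov : covers u v := by
    intro j hj
    have hju : u j ≠ 0 := by simpa [supp] using hj
    have hjne : j ≠ i := by intro hji; rw [hji] at hju; exact hju hui
    have : v j ≠ 0 := by simpa [hu, hjne] using hju
    simp [supp, this]
  have := h.2 u ⟨hple, hune⟩ hcov
  rw [← this] at hvi
  exact hvi hui

/-- every common larger half v of c and c' satisfies v ⊆ c ∩ c'. -/
theorem stmt5 {n : ℕ} (C : Submodule (ZMod 2) (Fin n → ZMod 2))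
    (c c' : Fin n → ZMod 2) (hc : c ∈ C) (hc' : c' ∈ C)
    (hc0 : c ≠ 0) (hc0' : c' ≠ 0)
    (v : Fin n → ZMod 2) (hv : v ∈ LH c ∩ LH c') :
    covers v (vand c c') := by
  obtain ⟨hvc, hvc'⟩ := hv
  have h1 := lh_covers c v hvc
  have h2 := lh_covers c' v hvc'
  intro i hi
  have hci : c i ≠ 0 := by simpa [supp] using h1 hi
  have hci' : c' i ≠ 0 := by simpa [supp] using h2 hi
  simp only [supp, vand, Finset.mem_filter, Finset.mem_univ, true_and]
  exact Finset.mem_filter.mpr ⟨Finset.mem_univ _, mul_ne_zero hci hci'⟩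
end

section
/- (Lemma 1, part 1) Let C be a binary linear code with odd minimum distance d. For every two distinct codewords c_1, c_1' of weight d in C, LH(c_1) ∩ LH(c_1') = ∅. -/
private lemma zm2 : ∀ a : ZMod 2, a = 0 ∨ a = 1 := by decide

private lemma zm2_add_eq_zero : ∀ a b : ZMod 2, a + b = 0 → a = b := by decide

lemma wt_eq_sum {n : ℕ} (x : Fin n → ZMod 2) : wt x = ∑ i : Fin n, (x i).val := by
  classical
  rw [wt, supp, Finset.card_filter]
  refine Finset.sum_congr rfl fun i _ => ?_
  rcases zm2 (x i) with h | h <;> rw [h] <;> decide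

private lemma val_add_of_disj {a b : ZMod 2} (h : a = 0 ∨ b = 0) :
    (a + b).val = a.val + b.val := by
  rcases h with h | h <;> simp [h]

lemma wt_add_disj {n : ℕ} {x y : Fin n → ZMod 2} (h : ∀ i, x i = 0 ∨ y i = 0) :
    wt (x + y) = wt x + wt y := by
  simp only [wt_eq_sum, Pi.add_apply, ← Finset.sum_add_distrib]
  exact Finset.sum_congr rfl fun i _ => val_add_of_disj (h i)

lemma nval_add_disj {n : ℕ} {x y : Fin n → ZMod 2} (h : ∀ i, x i = 0 ∨ y i = 0) :
    nval (x + y) = nval x + nval y := by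
  simp only [nval, Pi.add_apply, ← Finset.sum_add_distrib]
  refine Finset.sum_congr rfl fun i _ => ?_
  rw [val_add_of_disj (h i), add_mul]

/-- A larger half of a nonzero codeword is covered by it. -/
lemma LH_supp_subset {n : ℕ} {c v : Fin n → ZMod 2} (hc : c ≠ 0) (hv : IsLH c v) :
    ∀ i, c i = 0 → v i = 0 := by
  classical
  set a : Fin n → ZMod 2 := fun i => v i * c i with ha
  set b : Fin n → ZMod 2 := fun i => v i * (1 + c i) with hb
  have hab : a + b = v := by
    funext i
    simp only [Pi.add_apply, ha, hb]
    rcases zm2 (v i) with h | h <;> rcases zm2 (c i) with h' | h' <;>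
      rw [h, h'] <;> decide
  have hdab : ∀ i, a i = 0 ∨ b i = 0 := by
    intro i
    simp only [ha, hb]
    rcases zm2 (v i) with h | h <;> rcases zm2 (c i) with h' | h' <;>
      rw [h, h'] <;> first | (left; decide) | (right; decide)
  have hdacb : ∀ i, (a + c) i = 0 ∨ b i = 0 := by
    intro i
    simp only [Pi.add_apply, ha, hb]
    rcases zm2 (v i) with h | h <;> rcases zm2 (c i) with h' | h' <;>
      rw [h, h'] <;> first | (left; decide) | (right; decide)
  obtain ⟨⟨hple, _⟩, hmin⟩ := hv
  have hvc : v + c = (a + c) + b := by rw [← hab]; abel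
  have hw1 : wt (v + c) = wt (a + c) + wt b := by rw [hvc, wt_add_disj hdacb]
  have hw2 : wt v = wt a + wt b := by rw [← hab, wt_add_disj hdab]
  have hn1 : nval (v + c) = nval (a + c) + nval b := by rw [hvc, nval_add_disj hdacb]
  have hn2 : nval v = nval a + nval b := by rw [← hab, nval_add_disj hdab]
  have hple' : ple (a + c) a := by
    rcases hple with h | ⟨h, h'⟩
    · left; omega
    · right; constructor <;> omega
  have hane : a + c ≠ a := by
    intro h
    apply hc
    have : a + c = a + 0 := by rw [h, add_zero]
    exact add_left_cancel this
  have hcov : covers a v := by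
    intro i hi
    simp only [supp, Finset.mem_filter, Finset.mem_univ, true_and, ha] at hi ⊢
    intro h0
    exact hi (by rw [h0, zero_mul])
  have heq : a = v := hmin a ⟨hple', hane⟩ hcov
  intro i hci
  have : a i = v i := congrFun heq i
  rw [← this, ha]
  simp [hci]

/-- A larger half of an odd-weight codeword has weight > w(c)/2. -/
lemma LH_wt {n : ℕ} {c v : Fin n → ZMod 2} (hc : c ≠ 0) (hodd : Odd (wt c))
    (hv : IsLH c v) : wt c < 2 * wt v := by
  have hsub := LH_supp_subset hc hv
  have hsum : wt (v + c) + wt v = wt c := by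
    simp only [wt_eq_sum, Pi.add_apply, ← Finset.sum_add_distrib]
    refine Finset.sum_congr rfl fun i _ => ?_
    rcases zm2 (c i) with h | h
    · rw [h, hsub i h]; decide
    · rcases zm2 (v i) with h' | h' <;> rw [h, h'] <;> decide
  obtain ⟨⟨hple, _⟩, _⟩ := hv
  obtain ⟨k, hk⟩ := hodd
  rcases hple with h | ⟨h, _⟩ <;> omega

/-- Lemma 1, part 1: distinct minimum-weight codewords share no
larger half (odd minimum distance d). -/
theorem stmt6 {n : ℕ} (C : Submodule (ZMod 2) (Fin n → ZMod 2)) (d : ℕ)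
    (hd : HasMinDist C d) (hodd : Odd d)
    (c1 c1' : Fin n → ZMod 2) (h1 : c1 ∈ C) (h1' : c1' ∈ C)
    (hw : wt c1 = d) (hw' : wt c1' = d) (hne : c1 ≠ c1') :
    LH c1 ∩ LH c1' = ∅ := by
  obtain ⟨_, hminC⟩ := hd
  obtain ⟨k, hk⟩ := hodd
  ext v
  simp only [Set.mem_inter_iff, Set.mem_empty_iff_false, iff_false]
  rintro ⟨hv1, hv1'⟩
  have hwt0 : wt (0 : Fin n → ZMod 2) = 0 := by simp [wt, supp]
  have hc1ne : c1 ≠ 0 := by intro h; rw [h, hwt0] at hw; omega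
  have hc1'ne : c1' ≠ 0 := by intro h; rw [h, hwt0] at hw'; omega
  have hodd1 : Odd (wt c1) := by rw [hw]; exact ⟨k, hk⟩
  have hodd1' : Odd (wt c1') := by rw [hw']; exact ⟨k, hk⟩
  have hbig : d < 2 * wt v := by rw [← hw]; exact LH_wt hc1ne hodd1 hv1
  have hs1 := LH_supp_subset hc1ne hv1
  have hs1' := LH_supp_subset hc1'ne hv1'
  have hCsum : c1 + c1' ∈ C := add_mem h1 h1'
  have hsne : c1 + c1' ≠ 0 := by
    intro h
    exact hne (funext fun i => zm2_add_eq_zero _ _ (congrFun h i))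
  have hdle : d ≤ wt (c1 + c1') := hminC _ hCsum hsne
  have hkey : wt (c1 + c1') + 2 * ∑ i : Fin n, (c1 i).val * (c1' i).val
      = wt c1 + wt c1' := by
    simp only [wt_eq_sum, Pi.add_apply, Finset.mul_sum, ← Finset.sum_add_distrib]
    refine Finset.sum_congr rfl fun i _ => ?_
    rcases zm2 (c1 i) with h | h <;> rcases zm2 (c1' i) with h' | h' <;>
      rw [h, h'] <;> decide
  have hS : wt v ≤ ∑ i : Fin n, (c1 i).val * (c1' i).val := by
    rw [wt_eq_sum]
    refine Finset.sum_le_sum fun i _ => ?_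
    rcases zm2 (v i) with h | h
    · rw [h]; exact Nat.zero_le _
    · have h1i : c1 i = 1 := by
        rcases zm2 (c1 i) with h0 | h0
        · rw [hs1 i h0] at h; exact absurd h (by decide)
        · exact h0
      have h1'i : c1' i = 1 := by
        rcases zm2 (c1' i) with h0 | h0
        · rw [hs1' i h0] at h; exact absurd h (by decide)
        · exact h0
      rw [h, h1i, h1'i]; decide
  omega
end

section
/- (Theorem 1) Let C be a binary linear code with odd minimum distance d, with coset leaders chosen as ⪯-minimum elements, and let T be a trial set for C. If C(d, (d+1)/2) > |A_d(T)| + |A_{d+1}(T)| − 1, then C(d,(d+1)/2)·(|A_d(T)| + |A_{d+1}(T)|) − (2|A_d(T)| + |A_{d+1}(T)| − 1)·|A_{d+1}(T)| ≤ |E^1_{(d+1)/2}(C)| ≤ C(d,(d+1)/2)·(|A_d(T)| + |A_{d+1}(T)|), where C(m,r) denotes the binomial coefficient. -/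
section Helpers
lemma supp_inj {n : ℕ} {x y : Fin n → ZMod 2} (h : supp x = supp y) : x = y := by
  funext i
  have hx := (Finset.ext_iff.mp h i)
  simp only [mem_supp] at hx
  have h2 : ∀ a b : ZMod 2, (a ≠ 0 ↔ b ≠ 0) → a = b := by decide
  exact h2 _ _ hx

lemma supp_add_s10 {n : ℕ} (x y : Fin n → ZMod 2) :
    supp (x + y) = (supp x ∪ supp y) \ (supp x ∩ supp y) := by
  ext i
  simp only [mem_supp, Finset.mem_sdiff, Finset.mem_union, Finset.mem_inter, Pi.add_apply]
  revert i
  intro i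
  have h2 : ∀ a b : ZMod 2, (a + b ≠ 0 ↔ (a ≠ 0 ∨ b ≠ 0) ∧ ¬(a ≠ 0 ∧ b ≠ 0)) := by decide
  exact h2 (x i) (y i)

lemma wt_add_eq {n : ℕ} (x y : Fin n → ZMod 2) :
    wt (x + y) + 2 * (supp x ∩ supp y).card = wt x + wt y := by
  have h1 : (supp x ∪ supp y).card + (supp x ∩ supp y).card = wt x + wt y :=
    Finset.card_union_add_card_inter _ _
  have h2 : (supp x ∩ supp y) ⊆ (supp x ∪ supp y) :=
    (Finset.inter_subset_left).trans Finset.subset_union_left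
  have h3 : ((supp x ∪ supp y) \ (supp x ∩ supp y)).card
      = (supp x ∪ supp y).card - (supp x ∩ supp y).card := Finset.card_sdiff_of_subset h2
  have h4 : (supp x ∩ supp y).card ≤ (supp x ∪ supp y).card := Finset.card_le_card h2
  rw [wt, supp_add_s10, h3]
  omega

lemma val_one_of_ne {a : ZMod 2} (h : a ≠ 0) : a.val = 1 := by
  revert h; revert a; decide

lemma nval_eq_sum {n : ℕ} (x : Fin n → ZMod 2) :
    nval x = ∑ i ∈ supp x, 2 ^ (n - 1 - (i : ℕ)) := by
  rw [nval, ← Finset.sum_filter_add_sum_filter_not Finset.univ (fun i => x i ≠ 0)]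
  have h1 : ∑ i ∈ Finset.univ.filter (fun i => ¬ x i ≠ 0), (x i).val * 2 ^ (n - 1 - (i:ℕ)) = 0 := by
    apply Finset.sum_eq_zero
    intro i hi
    simp only [Finset.mem_filter, not_not] at hi
    rw [hi.2]; simp
  rw [h1, add_zero]
  apply Finset.sum_congr rfl
  intro i hi
  simp only [Finset.mem_filter] at hi
  rw [val_one_of_ne hi.2, one_mul]

lemma nval_lt {n : ℕ} (x y : Fin n → ZMod 2) (m : Fin n)
    (hm : m ∈ supp y) (hx : ∀ i ∈ supp x, m < i) : nval x < nval y := by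
  have hy : 2 ^ (n - 1 - (m : ℕ)) ≤ nval y := by
    rw [nval_eq_sum]
    exact Finset.single_le_sum (f := fun i : Fin n => 2 ^ (n - 1 - (i:ℕ))) (fun i _ => Nat.zero_le _) hm
  have hxlt : nval x < 2 ^ (n - 1 - (m : ℕ)) := by
    rw [nval_eq_sum]
    have hinj : Set.InjOn (fun i : Fin n => n - 1 - (i : ℕ)) (supp x) := by
      intro a ha b hb hab
      have ha' : (a : ℕ) < n := a.isLt
      have hb' : (b : ℕ) < n := b.isLt
      simp only at hab
      exact Fin.ext (by omega)
    rw [← Finset.sum_image (fun a ha b hb h => hinj ha hb h)]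
    have hsub : (supp x).image (fun i : Fin n => n - 1 - (i : ℕ))
        ⊆ Finset.range (n - 1 - (m : ℕ)) := by
      intro j hj
      simp only [Finset.mem_image] at hj
      obtain ⟨i, hi, rfl⟩ := hj
      have h1 := hx i hi
      have h2 : (i : ℕ) < n := i.isLt
      have h3 : (m : ℕ) < (i : ℕ) := h1
      simp only [Finset.mem_range]
      omega
    calc ∑ j ∈ (supp x).image (fun i : Fin n => n - 1 - (i : ℕ)), 2 ^ j
        ≤ ∑ j ∈ Finset.range (n - 1 - (m : ℕ)), 2 ^ j :=
          Finset.sum_le_sum_of_subset hsub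
      _ < 2 ^ (n - 1 - (m : ℕ)) := by
          rw [Nat.geomSum_eq (le_refl 2)]
          have : 1 ≤ 2 ^ (n - 1 - (m:ℕ)) := Nat.one_le_two_pow
          omega
  omega

def ind {n : ℕ} (A : Finset (Fin n)) : Fin n → ZMod 2 := fun i => if i ∈ A then 1 else 0

lemma supp_ind {n : ℕ} (A : Finset (Fin n)) : supp (ind A) = A := by
  ext i; simp [supp, ind]

lemma supp_inj' {n : ℕ} {x y : Fin n → ZMod 2} (h : supp x = supp y) : x = y := by
  funext i
  have hx := (Finset.ext_iff.mp h i)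
  simp only [mem_supp] at hx
  have h2 : ∀ a b : ZMod 2, (a ≠ 0 ↔ b ≠ 0) → a = b := by decide
  exact h2 _ _ hx

lemma card_Hd {n : ℕ} (S : Finset (Fin n)) (t : ℕ) :
    (Finset.univ.filter (fun v : Fin n → ZMod 2 => supp v ⊆ S ∧ wt v = t)).card
      = S.card.choose t := by
  rw [← Finset.card_powersetCard t S]
  apply Finset.card_bij (fun v _ => supp v)
  · intro v hv
    simp only [Finset.mem_filter] at hv
    simp only [Finset.mem_powersetCard]
    exact ⟨hv.2.1, hv.2.2⟩
  · intro a _ b _ h; exact supp_inj' h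
  · intro B hB
    simp only [Finset.mem_powersetCard] at hB
    refine ⟨ind B, ?_, supp_ind B⟩
    simp only [Finset.mem_filter, Finset.mem_univ, true_and]
    rw [wt, supp_ind]
    exact ⟨hB.1, hB.2⟩

lemma card_He {n : ℕ} (S : Finset (Fin n)) (m : Fin n) (hm : m ∈ S) (t : ℕ) :
    (Finset.univ.filter (fun v : Fin n → ZMod 2 =>
      supp v ⊆ S ∧ wt v = t + 1 ∧ m ∈ supp v)).card
      = (S.card - 1).choose t := by
  have hcard : (S.erase m).card = S.card - 1 := Finset.card_erase_of_mem hm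
  rw [← hcard, ← Finset.card_powersetCard t (S.erase m)]
  apply Finset.card_bij (fun v _ => (supp v).erase m)
  · intro v hv
    simp only [Finset.mem_filter] at hv
    simp only [Finset.mem_powersetCard]
    constructor
    · exact Finset.erase_subset_erase m hv.2.1
    · rw [Finset.card_erase_of_mem hv.2.2.2]
      have := hv.2.2.1
      rw [wt] at this
      omega
  · intro a ha b hb h
    simp only [Finset.mem_filter] at ha hb
    apply supp_inj'
    have : insert m ((supp a).erase m) = insert m ((supp b).erase m) := by rw [h]
    rwa [Finset.insert_erase ha.2.2.2, Finset.insert_erase hb.2.2.2] at this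
  · intro B hB
    simp only [Finset.mem_powersetCard] at hB
    have hmB : m ∉ B := fun h => (Finset.mem_erase.mp (hB.1 h)).1 rfl
    refine ⟨ind (insert m B), ?_, ?_⟩
    · simp only [Finset.mem_filter, Finset.mem_univ, true_and]
      rw [wt, supp_ind]
      refine ⟨?_, ?_, Finset.mem_insert_self m B⟩
      · intro i hi
        rcases Finset.mem_insert.mp hi with rfl | h
        · exact hm
        · exact (Finset.mem_erase.mp (hB.1 h)).2
      · rw [Finset.card_insert_of_notMem hmB, hB.2]
    · rw [supp_ind, Finset.erase_insert hmB]

lemma bonferroni {α β : Type*} [DecidableEq α] [DecidableEq β] (s : Finset α) (f : α → Finset β) :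
    ∑ i ∈ s, (f i).card ≤ (s.biUnion f).card + ∑ i ∈ s, ∑ j ∈ s \ {i}, (f i ∩ f j).card := by
  classical
  induction s using Finset.induction_on with
  | empty => simp
  | @insert i s hi IH =>
    rw [Finset.sum_insert hi, Finset.biUnion_insert]
    have h1 : (f i).card + (s.biUnion f).card
        = (f i ∪ s.biUnion f).card + (f i ∩ s.biUnion f).card :=
      (Finset.card_union_add_card_inter _ _).symm
    have h2 : (f i ∩ s.biUnion f).card ≤ ∑ j ∈ s, (f i ∩ f j).card := by
      rw [Finset.inter_biUnion]
      exact Finset.card_biUnion_le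
    have h3 : ∑ j ∈ (insert i s) \ {i}, (f i ∩ f j).card = ∑ j ∈ s, (f i ∩ f j).card := by
      congr 1
      rw [Finset.insert_sdiff_of_mem _ (Finset.mem_singleton_self i),
        Finset.sdiff_singleton_eq_erase, Finset.erase_eq_of_notMem hi]
    have h4 : ∀ i' ∈ s, ∑ j ∈ s \ {i'}, (f i' ∩ f j).card
        ≤ ∑ j ∈ (insert i s) \ {i'}, (f i' ∩ f j).card := by
      intro i' hi'
      apply Finset.sum_le_sum_of_subset
      exact Finset.sdiff_subset_sdiff (Finset.subset_insert _ _) (le_refl _)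
    have h5 : ∑ i' ∈ s, ∑ j ∈ s \ {i'}, (f i' ∩ f j).card
        ≤ ∑ i' ∈ s, ∑ j ∈ (insert i s) \ {i'}, (f i' ∩ f j).card :=
      Finset.sum_le_sum h4
    rw [Finset.sum_insert hi, h3]
    omega

end Helpers

/-- Theorem 1: bounds on |E¹_{(d+1)/2}(C)| for odd d. -/
theorem stmt10 {n : ℕ} (C : Submodule (ZMod 2) (Fin n → ZMod 2)) (d : ℕ)
    (hd : HasMinDist C d) (hodd : Odd d)
    (T : Set (Fin n → ZMod 2)) (hT : IsTrialSet C T)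
    (hcond : ((Nat.choose d ((d + 1) / 2) : ℚ)) >
      ((Aw T d).ncard : ℚ) + ((Aw T (d + 1)).ncard : ℚ) - 1) :
    ((Nat.choose d ((d + 1) / 2) : ℚ)) *
        (((Aw T d).ncard : ℚ) + ((Aw T (d + 1)).ncard : ℚ)) -
      (2 * ((Aw T d).ncard : ℚ) + ((Aw T (d + 1)).ncard : ℚ) - 1) *
        ((Aw T (d + 1)).ncard : ℚ)
      ≤ ((Aw (E1 C) ((d + 1) / 2)).ncard : ℚ) ∧
    ((Aw (E1 C) ((d + 1) / 2)).ncard : ℚ) ≤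
      ((Nat.choose d ((d + 1) / 2) : ℚ)) *
        (((Aw T d).ncard : ℚ) + ((Aw T (d + 1)).ncard : ℚ)) := by
  classical
  obtain ⟨k, hk⟩ := hodd
  have ht2 : (d + 1) / 2 = k + 1 := by omega
  -- basic char-2 facts
  have addself : ∀ x : Fin n → ZMod 2, x + x = 0 := by
    intro x; funext i
    have : ∀ a : ZMod 2, a + a = 0 := by decide
    exact this (x i)
  have addcancel : ∀ x y : Fin n → ZMod 2, (x + y) + y = x := by
    intro x y; funext i
    have : ∀ a b : ZMod 2, (a + b) + b = a := by decide
    exact this (x i) (y i)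
  -- Finsets
  set Fd : Finset (Fin n → ZMod 2) := Finset.univ.filter (fun c => c ∈ T ∧ wt c = d) with hFd
  set Fe : Finset (Fin n → ZMod 2) := Finset.univ.filter (fun c => c ∈ T ∧ wt c = d + 1) with hFe
  set F : Finset (Fin n → ZMod 2) := Finset.univ.filter (fun v => v ∈ E1 C ∧ wt v = k + 1) with hF
  set f : (Fin n → ZMod 2) → Finset (Fin n → ZMod 2) := fun c =>
    if wt c = d then Finset.univ.filter (fun v => supp v ⊆ supp c ∧ wt v = k + 1)
    else Finset.univ.filter (fun v => supp v ⊆ supp c ∧ wt v = k + 1 ∧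
      ∃ j ∈ supp v, ∀ i ∈ supp c, j ≤ i) with hf
  set a := Fd.card with ha
  set b := Fe.card with hb
  set N := Nat.choose (2 * k + 1) (k + 1) with hN
  -- ncard identifications
  have hAwd : (Aw T d).ncard = a := by
    rw [ha, ← Set.ncard_coe_finset]
    congr 1
    ext c
    simp [Aw, hFd]
  have hAwe : (Aw T (d + 1)).ncard = b := by
    rw [hb, ← Set.ncard_coe_finset]
    congr 1
    ext c
    simp [Aw, hFe]
  have hAwE : (Aw (E1 C) ((d + 1) / 2)).ncard = F.card := by
    rw [← Set.ncard_coe_finset]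
    congr 1
    ext v
    simp [Aw, hF, ht2]
  have hNd : Nat.choose d ((d + 1) / 2) = N := by rw [ht2, hk]
  -- disjointness of Fd and Fe
  have hdisj : Disjoint Fd Fe := by
    rw [Finset.disjoint_left]
    intro c hc1 hc2
    simp only [hFd, hFe, Finset.mem_filter] at hc1 hc2
    omega
  -- elements of T are nonzero codewords of weight ≥ d
  have hTC : ∀ c ∈ T, c ∈ C ∧ c ≠ 0 ∧ d ≤ wt c := by
    intro c hc
    have h1 := hT.1 hc
    exact ⟨h1.1, h1.2, hd.2 c h1.1 h1.2⟩
  -- low-weight vectors are coset leaders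
  have hlow : ∀ v : Fin n → ZMod 2, wt v ≤ k → IsCosetLeader C v := by
    intro v hv u hu
    by_cases huv : u = v
    · subst huv; right; exact ⟨rfl, le_refl _⟩
    · have hne : u + v ≠ 0 := by
        intro h0
        apply huv
        have := addcancel u v
        rw [← this, h0, zero_add]
      have hd2 : d ≤ wt (u + v) := hd.2 _ hu hne
      have htri := wt_add_eq u v
      left
      omega
  -- f c has the right cardinality
  have hcardd : ∀ c ∈ Fd, (f c).card = N := by
    intro c hc
    simp only [hFd, Finset.mem_filter] at hc
    rw [hf]
    simp only [if_pos hc.2.2]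
    rw [card_Hd]
    rw [show (supp c).card = 2 * k + 1 by rw [← wt]; omega]
  have hcarde : ∀ c ∈ Fe, (f c).card = N := by
    intro c hc
    simp only [hFe, Finset.mem_filter] at hc
    have hwc : wt c = 2 * k + 2 := by omega
    have hne : wt c ≠ d := by omega
    have hnemp : (supp c).Nonempty := by
      rw [← Finset.card_pos, ← wt]; omega
    set m := (supp c).min' hnemp with hm
    have hmS : m ∈ supp c := Finset.min'_mem _ _
    rw [hf]
    simp only [if_neg hne]
    have heq : Finset.univ.filter (fun v : Fin n → ZMod 2 => supp v ⊆ supp c ∧ wt v = k + 1 ∧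
        ∃ j ∈ supp v, ∀ i ∈ supp c, j ≤ i)
        = Finset.univ.filter (fun v : Fin n → ZMod 2 =>
          supp v ⊆ supp c ∧ wt v = k + 1 ∧ m ∈ supp v) := by
      apply Finset.filter_congr
      intro v _
      constructor
      · rintro ⟨h1, h2, j, hj, hji⟩
        refine ⟨h1, h2, ?_⟩
        have : j = m := le_antisymm (hji m hmS) (Finset.min'_le _ _ (h1 hj))
        rwa [← this]
      · rintro ⟨h1, h2, h3⟩
        exact ⟨h1, h2, m, h3, fun i hi => Finset.min'_le _ _ hi⟩
    rw [heq, card_He (supp c) m hmS k]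
    rw [show (supp c).card = 2 * k + 2 by rw [← wt]; omega]
    rw [show 2 * k + 2 - 1 = 2 * k + 1 by omega, hN]
    rw [← Nat.choose_symm (show k + 1 ≤ 2 * k + 1 by omega)]
    congr 1
    omega
  -- lower bound: f c ⊆ F
  have hfd_sub : ∀ c ∈ Fd, f c ⊆ F := by
    intro c hc v hv
    simp only [hFd, Finset.mem_filter] at hc
    rw [hf] at hv
    simp only [if_pos hc.2.2, Finset.mem_filter] at hv
    obtain ⟨-, hsub, hwv⟩ := hv
    obtain ⟨hcC, hc0, -⟩ := hTC c hc.2.1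
    simp only [hF, Finset.mem_filter, Finset.mem_univ, true_and]
    refine ⟨?_, hwv⟩
    intro hlead
    have hu : (v + c) + v ∈ C := by
      rw [show (v + c) + v = c from by rw [add_comm v c, addcancel]]
      exact hcC
    have hple := hlead (v + c) hu
    have hsupp : supp (v + c) = supp c \ supp v := by
      rw [supp_add_s10]
      ext i
      simp only [Finset.mem_sdiff, Finset.mem_union, Finset.mem_inter]
      constructor
      · rintro ⟨h1 | h1, h2⟩
        · exact absurd ⟨h1, hsub h1⟩ h2
        · exact ⟨h1, fun hv' => h2 ⟨hv', h1⟩⟩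
      · rintro ⟨h1, h2⟩
        exact ⟨Or.inr h1, fun h => h2 h.1⟩
    have hwu : wt (v + c) = k := by
      rw [wt, hsupp, Finset.card_sdiff_of_subset hsub, ← wt, ← wt]
      omega
    rcases hple with h | ⟨h, -⟩ <;> omega
  have hfe_sub : ∀ c ∈ Fe, f c ⊆ F := by
    intro c hc v hv
    simp only [hFe, Finset.mem_filter] at hc
    have hne : wt c ≠ d := by omega
    rw [hf] at hv
    simp only [if_neg hne, Finset.mem_filter] at hv
    obtain ⟨-, hsub, hwv, j, hjv, hji⟩ := hv
    obtain ⟨hcC, hc0, -⟩ := hTC c hc.2.1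
    simp only [hF, Finset.mem_filter, Finset.mem_univ, true_and]
    refine ⟨?_, hwv⟩
    intro hlead
    have hu : (v + c) + v ∈ C := by
      rw [show (v + c) + v = c from by rw [add_comm v c, addcancel]]
      exact hcC
    have hple := hlead (v + c) hu
    have hsupp : supp (v + c) = supp c \ supp v := by
      rw [supp_add_s10]
      ext i
      simp only [Finset.mem_sdiff, Finset.mem_union, Finset.mem_inter]
      constructor
      · rintro ⟨h1 | h1, h2⟩
        · exact absurd ⟨h1, hsub h1⟩ h2
        · exact ⟨h1, fun hv' => h2 ⟨hv', h1⟩⟩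
      · rintro ⟨h1, h2⟩
        exact ⟨Or.inr h1, fun h => h2 h.1⟩
    have hwu : wt (v + c) = k + 1 := by
      rw [wt, hsupp, Finset.card_sdiff_of_subset hsub, ← wt, ← wt]
      omega
    have hnv : nval (v + c) < nval v := by
      apply nval_lt _ _ j hjv
      intro i hi
      rw [hsupp, Finset.mem_sdiff] at hi
      have h1 : j ≤ i := hji i hi.1
      have h2 : j ≠ i := fun h => hi.2 (h ▸ hjv)
      exact lt_of_le_of_ne h1 h2
    rcases hple with h | ⟨-, h⟩ <;> omega
  -- upper bound: F ⊆ biUnion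
  have hFsub : F ⊆ (Fd ∪ Fe).biUnion f := by
    intro v hv
    simp only [hF, Finset.mem_filter, Finset.mem_univ, true_and] at hv
    obtain ⟨hv1, hwv⟩ := hv
    -- v is in M1
    have hM1 : v ∈ M1 C := by
      refine ⟨hv1, ?_⟩
      intro u hu hcov
      by_contra hne
      have hss : supp u ⊂ supp v :=
        lt_of_le_of_ne hcov (fun h => hne (supp_inj h))
      have hwu : wt u < k + 1 := by
        rw [← hwv]
        exact Finset.card_lt_card hss
      exact hu (hlow u (by omega))
    have hLH := hT.2 hM1
    simp only [LHset, Set.mem_iUnion] at hLH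
    obtain ⟨c, hcT, hvLH⟩ := hLH
    obtain ⟨hcC, hc0, hdc⟩ := hTC c hcT
    obtain ⟨⟨hple, hne⟩, -⟩ := hvLH
    have htri := wt_add_eq v c
    have hinter : (supp v ∩ supp c).card ≤ k + 1 := by
      rw [← hwv]
      exact Finset.card_le_card Finset.inter_subset_left
    rw [Finset.mem_biUnion]
    rcases hple with h | ⟨h, hnval⟩
    · -- wt (v+c) < k+1 : c has weight d, supp v ⊆ supp c
      -- wt c = wt(v+c) + 2I - (k+1); also wt(v+c) ≥ wt c - (k+1)
      have hI : (supp v ∩ supp c).card = k + 1 := by omega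
      have hwc : wt c = d := by omega
      have hsub : supp v ⊆ supp c := by
        have : supp v ∩ supp c = supp v :=
          Finset.eq_of_subset_of_card_le Finset.inter_subset_left (by rw [hI]; exact le_of_eq hwv)
        rw [← this]
        exact Finset.inter_subset_right
      refine ⟨c, ?_, ?_⟩
      · rw [Finset.mem_union]
        left
        rw [hFd, Finset.mem_filter]
        exact ⟨Finset.mem_univ c, hcT, hwc⟩
      · simp only [hf]
        rw [if_pos hwc, Finset.mem_filter]
        exact ⟨Finset.mem_univ _, hsub, hwv⟩
    · -- equal weights: wt c = 2I, c has weight d+1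
      have hwc : wt c = 2 * k + 2 := by omega
      have hI : (supp v ∩ supp c).card = k + 1 := by omega
      have hsub : supp v ⊆ supp c := by
        have : supp v ∩ supp c = supp v :=
          Finset.eq_of_subset_of_card_le Finset.inter_subset_left (by rw [hI]; exact le_of_eq hwv)
        rw [← this]
        exact Finset.inter_subset_right
      have hsupp : supp (v + c) = supp c \ supp v := by
        rw [supp_add_s10]
        ext i
        simp only [Finset.mem_sdiff, Finset.mem_union, Finset.mem_inter]
        constructor
        · rintro ⟨h1 | h1, h2⟩
          · exact absurd ⟨h1, hsub h1⟩ h2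
          · exact ⟨h1, fun hv' => h2 ⟨hv', h1⟩⟩
        · rintro ⟨h1, h2⟩
          exact ⟨Or.inr h1, fun h => h2 h.1⟩
      have hvne : (supp v).Nonempty := by
        rw [← Finset.card_pos, ← wt]; omega
      set j := (supp v).min' hvne with hj
      have hjv : j ∈ supp v := Finset.min'_mem _ _
      have hjall : ∀ i ∈ supp c, j ≤ i := by
        intro i hi
        by_contra hlt
        push_neg at hlt
        have hiv : i ∉ supp v := fun h => absurd (Finset.min'_le _ _ h) (by omega)
        have hiu : i ∈ supp (v + c) := by rw [hsupp, Finset.mem_sdiff]; exact ⟨hi, hiv⟩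
        have : nval v < nval (v + c) := by
          apply nval_lt _ _ i hiu
          intro l hl
          have h1 : j ≤ l := Finset.min'_le _ _ hl
          omega
        omega
      refine ⟨c, ?_, ?_⟩
      · rw [Finset.mem_union]
        right
        rw [hFe, Finset.mem_filter]
        exact ⟨Finset.mem_univ c, hcT, by omega⟩
      · simp only [hf]
        rw [if_neg (show wt c ≠ d by omega), Finset.mem_filter]
        exact ⟨Finset.mem_univ _, hsub, hwv, j, hjv, hjall⟩
  -- pairwise intersections
  have hsupple : ∀ c c' : Fin n → ZMod 2, c ∈ T → c' ∈ T → c ≠ c' →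
      2 * (supp c ∩ supp c').card + d ≤ wt c + wt c' := by
    intro c c' hc hc' hne
    obtain ⟨hcC, hc0, -⟩ := hTC c hc
    obtain ⟨hcC', hc0', -⟩ := hTC c' hc'
    have hsum : c + c' ∈ C := C.add_mem hcC hcC'
    have hne0 : c + c' ≠ 0 := by
      intro h0
      apply hne
      have := addcancel c c'
      rw [← this, h0, zero_add]
    have := hd.2 _ hsum hne0
    have htri := wt_add_eq c c'
    omega
  have hint_dd : ∀ c ∈ Fd, ∀ c' ∈ Fd, c ≠ c' → (f c ∩ f c').card = 0 := by
    intro c hc c' hc' hne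
    simp only [hFd, Finset.mem_filter] at hc hc'
    rw [Finset.card_eq_zero, Finset.eq_empty_iff_forall_notMem]
    intro v hv
    rw [Finset.mem_inter, hf] at hv
    simp only [if_pos hc.2.2, if_pos hc'.2.2, Finset.mem_filter] at hv
    obtain ⟨⟨-, hs1, hw1⟩, ⟨-, hs2, -⟩⟩ := hv
    have hsub : supp v ⊆ supp c ∩ supp c' := Finset.subset_inter hs1 hs2
    have h1 : k + 1 ≤ (supp c ∩ supp c').card := by
      rw [← hw1, wt]; exact Finset.card_le_card hsub
    have := hsupple c c' hc.2.1 hc'.2.1 hne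
    omega
  have hint_le1 : ∀ c c', c ∈ Fd ∪ Fe → c' ∈ Fd ∪ Fe → c ≠ c' → (f c ∩ f c').card ≤ 1 := by
    intro c c' hc hc' hne
    have hcT' : c ∈ T ∧ (wt c = d ∨ wt c = d + 1) := by
      rw [Finset.mem_union] at hc
      rcases hc with h | h <;> simp only [hFd, hFe, Finset.mem_filter] at h <;>
        exact ⟨h.2.1, by omega⟩
    have hcT'' : c' ∈ T ∧ (wt c' = d ∨ wt c' = d + 1) := by
      rw [Finset.mem_union] at hc'
      rcases hc' with h | h <;> simp only [hFd, hFe, Finset.mem_filter] at h <;>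
        exact ⟨h.2.1, by omega⟩
    have hIle := hsupple c c' hcT'.1 hcT''.1 hne
    have hIcard : (supp c ∩ supp c').card ≤ k + 1 := by omega
    rw [Finset.card_le_one]
    intro v hv w hw
    have aux : ∀ e u, u ∈ f e → supp u ⊆ supp e ∧ wt u = k + 1 := by
      intro e u hu
      simp only [hf] at hu
      by_cases h : wt e = d
      · rw [if_pos h, Finset.mem_filter] at hu
        exact ⟨hu.2.1, hu.2.2⟩
      · rw [if_neg h, Finset.mem_filter] at hu
        exact ⟨hu.2.1, hu.2.2.1⟩
    have hget : ∀ u, u ∈ f c ∩ f c' → supp u ⊆ supp c ∩ supp c' ∧ wt u = k + 1 := by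
      intro u hu
      rw [Finset.mem_inter] at hu
      exact ⟨Finset.subset_inter (aux c u hu.1).1 (aux c' u hu.2).1, (aux c u hu.1).2⟩
    obtain ⟨hv1, hv2⟩ := hget v hv
    obtain ⟨hw1, hw2⟩ := hget w hw
    have hveq : supp v = supp c ∩ supp c' :=
      Finset.eq_of_subset_of_card_le hv1 (by
        have h9 : (supp v).card = k + 1 := hv2
        omega)
    have hweq : supp w = supp c ∩ supp c' :=
      Finset.eq_of_subset_of_card_le hw1 (by
        have h9 : (supp w).card = k + 1 := hw2
        omega)
    exact supp_inj (hveq.trans hweq.symm)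
  -- Now assemble the bounds
  have hub : F.card ≤ N * (a + b) := by
    calc F.card ≤ ((Fd ∪ Fe).biUnion f).card := Finset.card_le_card hFsub
      _ ≤ ∑ c ∈ Fd ∪ Fe, (f c).card := Finset.card_biUnion_le
      _ = ∑ c ∈ Fd, (f c).card + ∑ c ∈ Fe, (f c).card := Finset.sum_union hdisj
      _ = N * a + N * b := by
          rw [Finset.sum_congr rfl hcardd, Finset.sum_congr rfl hcarde]
          simp [Finset.sum_const, mul_comm, ha, hb]
      _ = N * (a + b) := by ring
  have hbiUnion_sub : (Fd ∪ Fe).biUnion f ⊆ F := by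
    intro v hv
    rw [Finset.mem_biUnion] at hv
    obtain ⟨c, hc, hvc⟩ := hv
    rw [Finset.mem_union] at hc
    rcases hc with h | h
    · exact hfd_sub c h hvc
    · exact hfe_sub c h hvc
  have hpair : ∑ c ∈ Fd ∪ Fe, ∑ j ∈ (Fd ∪ Fe) \ {c}, (f c ∩ f j).card
      ≤ a * b + b * (a + (b - 1)) := by
    have hterm : ∀ c ∈ Fd, ∑ j ∈ (Fd ∪ Fe) \ {c}, (f c ∩ f j).card ≤ b := by
      intro c hc
      have : ∑ j ∈ (Fd ∪ Fe) \ {c}, (f c ∩ f j).card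
          ≤ ∑ j ∈ (Fd ∪ Fe) \ {c}, (if j ∈ Fe then 1 else 0) := by
        apply Finset.sum_le_sum
        intro j hj
        rw [Finset.mem_sdiff, Finset.mem_union, Finset.mem_singleton] at hj
        by_cases hje : j ∈ Fe
        · rw [if_pos hje]
          exact hint_le1 c j (Finset.mem_union_left _ hc) (Finset.mem_union_right _ hje)
            (fun h => hj.2 h.symm)
        · rw [if_neg hje]
          have hjd : j ∈ Fd := by tauto
          rw [hint_dd c hc j hjd (fun h => hj.2 h.symm)]
      refine le_trans this ?_
      rw [Finset.sum_ite_mem]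
      have : ((Fd ∪ Fe) \ {c}) ∩ Fe ⊆ Fe := Finset.inter_subset_right
      calc ∑ _j ∈ ((Fd ∪ Fe) \ {c}) ∩ Fe, 1 = (((Fd ∪ Fe) \ {c}) ∩ Fe).card := by simp
        _ ≤ Fe.card := Finset.card_le_card this
    have hterm' : ∀ c ∈ Fe, ∑ j ∈ (Fd ∪ Fe) \ {c}, (f c ∩ f j).card ≤ a + (b - 1) := by
      intro c hc
      have hcu : c ∈ Fd ∪ Fe := Finset.mem_union_right _ hc
      have : ∑ j ∈ (Fd ∪ Fe) \ {c}, (f c ∩ f j).card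
          ≤ ∑ _j ∈ (Fd ∪ Fe) \ {c}, 1 := by
        apply Finset.sum_le_sum
        intro j hj
        rw [Finset.mem_sdiff, Finset.mem_singleton] at hj
        exact hint_le1 c j hcu hj.1 (fun h => hj.2 h.symm)
      refine le_trans this ?_
      rw [Finset.sum_const, smul_eq_mul, mul_one]
      rw [Finset.card_sdiff_of_subset (by simpa using hcu)]
      rw [Finset.card_union_of_disjoint hdisj, Finset.card_singleton]
      omega
    calc ∑ c ∈ Fd ∪ Fe, ∑ j ∈ (Fd ∪ Fe) \ {c}, (f c ∩ f j).card
        = ∑ c ∈ Fd, ∑ j ∈ (Fd ∪ Fe) \ {c}, (f c ∩ f j).card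
          + ∑ c ∈ Fe, ∑ j ∈ (Fd ∪ Fe) \ {c}, (f c ∩ f j).card := Finset.sum_union hdisj
      _ ≤ ∑ _c ∈ Fd, b + ∑ _c ∈ Fe, (a + (b - 1)) := by
          gcongr with c hc c hc
          · exact hterm c hc
          · exact hterm' c hc
      _ = a * b + b * (a + (b - 1)) := by
          rw [Finset.sum_const, Finset.sum_const, smul_eq_mul, smul_eq_mul]
  have hlb : N * (a + b) ≤ F.card + (a * b + b * (a + (b - 1))) := by
    have h1 := bonferroni (Fd ∪ Fe) f
    have h2 : ∑ c ∈ Fd ∪ Fe, (f c).card = N * (a + b) := by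
      rw [Finset.sum_union hdisj, Finset.sum_congr rfl hcardd, Finset.sum_congr rfl hcarde]
      simp [Finset.sum_const, mul_comm]
      ring
    have h3 : ((Fd ∪ Fe).biUnion f).card ≤ F.card := Finset.card_le_card hbiUnion_sub
    omega
  -- final arithmetic
  rw [hAwd, hAwe, hAwE, hNd]
  constructor
  · rcases Nat.eq_zero_or_pos b with hb0 | hbpos
    · rw [hb0] at hlb ⊢
      have hlb' : N * a ≤ F.card := by simpa using hlb
      have hq : (N : ℚ) * a ≤ (F.card : ℚ) := by exact_mod_cast hlb'
      push_cast
      nlinarith [hq]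
    · have hcast : ((b - 1 : ℕ) : ℚ) = (b : ℚ) - 1 := by
        rw [Nat.cast_sub hbpos]; simp
      have := hlb
      have hq : (N : ℚ) * (a + b) ≤ (F.card : ℚ) + (a * b + b * (a + ((b : ℚ) - 1))) := by
        rw [← hcast]
        exact_mod_cast this
      nlinarith [hq]
  · have hq : (F.card : ℚ) ≤ (N : ℚ) * (a + b) := by exact_mod_cast hub
    nlinarith [hq]
end
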